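/- arXiv:0904.4425 — 8 statements merged into one kernel-verified Lean document; each statement's English description precedes it below -/
import Mathlib

section
/- Let (R, 𝔪, k) be a Noetherian local ring of prime characteristic p, and let M be an Artinian R-module with an injective Frobenius action F. Set S = Soc(M). If S ∩ F^e(S) ≠ 0 for infinitely many e > 0, then there exists a nonzero element η ∈ S such that F^e(η) ∈ S for every e ≥ 0. -/
/-- The socle of a module `M` over a local ring `R`:
the set of elements killed by the maximal ideal. -/
def Socle (R M : Type*) [CommRing R] [IsLocalRing R] [AddCommGroup M] [Module R M] : Set M :=
  {x : M | ∀ r ∈ IsLocalRing.maximalIdeal R, r • x = 0}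

/-- **Fedder–Watanabe.** Let `(R, 𝔪, k)` be a Noetherian local ring of prime characteristic `p`
and `M` an Artinian `R`-module with an injective Frobenius action `F`.  If
`Soc(M) ∩ F^e(Soc(M)) ≠ 0` for infinitely many `e > 0`, then there is a nonzero `η ∈ Soc(M)`
with `F^e(η) ∈ Soc(M)` for all `e ≥ 0`. -/
theorem socle_frobenius_stable_element
    {R M : Type*} [CommRing R] [IsLocalRing R] [IsNoetherianRing R]
    (p : ℕ) [Fact p.Prime] [CharP R p]
    [AddCommGroup M] [Module R M] [IsArtinian R M]
    (F : M → M)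
    (hadd : ∀ x y : M, F (x + y) = F x + F y)
    (hsmul : ∀ (r : R) (m : M), F (r • m) = r ^ p • F m)
    (hinj : Function.Injective F)
    (hinf : {e : ℕ | 0 < e ∧ ∃ m ∈ Socle R M ∩ (F^[e] '' Socle R M), m ≠ 0}.Infinite) :
    ∃ η ∈ Socle R M, η ≠ 0 ∧ ∀ e : ℕ, F^[e] η ∈ Socle R M := by
  have hp : 0 < p := (Fact.out : p.Prime).pos
  have hzero : F 0 = 0 := by
    have h := hsmul 0 0
    simpa [zero_pow hp.ne'] using h
  have hiterzero : ∀ j, F^[j] (0 : M) = 0 := fun j => Function.iterate_fixed hzero j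
  have hiteradd : ∀ (j : ℕ) (x y : M), F^[j] (x + y) = F^[j] x + F^[j] y := by
    intro j
    induction j with
    | zero => intro x y; simp
    | succ n ih =>
      intro x y
      rw [Function.iterate_succ_apply', Function.iterate_succ_apply',
          Function.iterate_succ_apply', ih, hadd]
  have hitersmul : ∀ (j : ℕ) (r : R) (m : M), F^[j] (r • m) = r ^ (p ^ j) • F^[j] m := by
    intro j
    induction j with
    | zero => intro r m; simp
    | succ n ih =>
      intro r m
      rw [Function.iterate_succ_apply', Function.iterate_succ_apply', ih, hsmul,
          ← pow_mul, ← pow_succ]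
  have hiterinj : ∀ j, Function.Injective (F^[j]) := fun j => hinj.iterate j
  have lemA : ∀ (z : M) (c : ℕ), 0 < c → F^[c] z ∈ Socle R M → z ∈ Socle R M := by
    intro z c hc hz r hr
    apply hiterinj c
    rw [hitersmul, hiterzero]
    exact hz (r ^ p ^ c) (Ideal.pow_mem_of_mem _ hr _ (pow_pos hp c))
  have hsoc_zero : (0 : M) ∈ Socle R M := fun r _ => smul_zero r
  let V : ℕ → Submodule R M := fun n =>
    { carrier := {x : M | ∀ j ≤ n, F^[j] x ∈ Socle R M}
      add_mem' := by
        intro a b ha hb j hj r hr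
        rw [hiteradd, smul_add, ha j hj r hr, hb j hj r hr, add_zero]
      zero_mem' := by
        intro j hj
        rw [hiterzero]; exact hsoc_zero
      smul_mem' := by
        intro c x hx j hj r hr
        rw [hitersmul, smul_comm, hx j hj r hr, smul_zero] }
  have hVanti : ∀ {a b : ℕ}, a ≤ b → V b ≤ V a := by
    intro a b hab x hx j hj
    exact hx j (hj.trans hab)
  obtain ⟨N, hN⟩ := IsArtinian.monotone_stabilizes
    (⟨fun n => OrderDual.toDual (V n), fun a b hab => hVanti hab⟩ : ℕ →o (Submodule R M)ᵒᵈ)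
  obtain ⟨e, he, hNe⟩ := hinf.exists_gt N
  obtain ⟨hepos, m, hm, hmne⟩ := he
  obtain ⟨hmS, s, hsS, hse⟩ := hm
  have hsV : s ∈ V e := by
    intro j hj
    rcases eq_or_lt_of_le hj with rfl | hlt
    · rw [hse]; exact hmS
    · apply lemA _ (e - j) (Nat.sub_pos_of_lt hlt)
      have h1 : F^[e - j] (F^[j] s) = F^[e] s := by
        rw [← Function.iterate_add_apply, Nat.sub_add_cancel hj]
      rw [h1, hse]; exact hmS
  have hVeq : ∀ n, N ≤ n → V N = V n := fun n hn => congrArg OrderDual.ofDual (hN n hn)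
  refine ⟨s, hsV 0 (Nat.zero_le e), ?_, ?_⟩
  · intro h
    apply hmne
    rw [← hse, h, hiterzero]
  · intro j
    have h2 : s ∈ V (max j e) := by
      rw [← hVeq (max j e) (hNe.le.trans (le_max_right j e)), hVeq e hNe.le]
      exact hsV
    exact h2 j (le_max_left j e)
end

section
/- Let (R, 𝔪, k) be a Noetherian local ring of prime characteristic p and let M be an Artinian R-module with an injective Frobenius action F. Then every ideal in Γ = {Ann_R(N) : N an R-submodule of M with F(N) ⊆ N} is a radical ideal of R. -/
/-!
If `r ^ n` kills an `F`-invariant submodule `N` and `n ≤ p ^ e`, then for `m ∈ N` we get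
`F^[e] (r • m) = r ^ (p ^ e - n) • r ^ n • F^[e] m = 0`, because `F^[e] m ∈ N`;
injectivity of `F^[e]` then gives `r • m = 0`.
-/

open Function Set

theorem Function.iterate_map_smul_of_map_smul_pow {R M : Type*} [Monoid R] [MulAction R M]
    {F : M → M} {q : ℕ} (hF : ∀ (r : R) (m : M), F (r • m) = r ^ q • F m)
    (e : ℕ) (r : R) (m : M) : F^[e] (r • m) = r ^ q ^ e • F^[e] m := by
  induction e with
  | zero => simp
  | succ e ih => rw [iterate_succ_apply', iterate_succ_apply', ih, hF, ← pow_mul, pow_succ]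

theorem Submodule.isRadical_annihilator_of_mapsTo {R M : Type*} [CommSemiring R]
    [AddCommMonoid M] [Module R M] {F : M → M} {q : ℕ} (hq : 1 < q)
    (hF : ∀ (r : R) (m : M), F (r • m) = r ^ q • F m) (hinj : Injective F)
    {N : Submodule R M} (hN : MapsTo F N N) : N.annihilator.IsRadical := by
  rintro r ⟨n, hn⟩
  rw [mem_annihilator] at hn ⊢
  intro m hm
  obtain ⟨e, he⟩ : ∃ e, n ≤ q ^ e := ⟨n, (Nat.lt_pow_self hq).le⟩
  have hzero : F^[e] 0 = 0 := by
    simpa [zero_pow (pow_ne_zero e (by omega : q ≠ 0))] using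
      iterate_map_smul_of_map_smul_pow hF e (0 : R) (0 : M)
  apply hinj.iterate e
  rw [iterate_map_smul_of_map_smul_pow hF, hzero, ← Nat.sub_add_cancel he, pow_add, mul_smul,
    hn _ (hN.iterate e hm), smul_zero]

theorem annihilators_of_frobenius_invariant_submodules_isRadical_general
    {R M : Type*} [CommRing R]
    (p : ℕ) [Fact p.Prime]
    [AddCommGroup M] [Module R M]
    (F : M → M)
    (hsmul : ∀ (r : R) (m : M), F (r • m) = r ^ p • F m)
    (hinj : Function.Injective F) :
    ∀ I ∈ {I : Ideal R | ∃ N : Submodule R M, (∀ x ∈ N, F x ∈ N) ∧ I = N.annihilator},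
      I.IsRadical := by
  rintro I ⟨N, hN, rfl⟩
  exact N.isRadical_annihilator_of_mapsTo (Fact.out : p.Prime).one_lt hsmul hinj hN

/-- **Sharp; Enescu–Hochster (radicality).** Let `(R, 𝔪, k)` be a Noetherian local ring of
prime characteristic `p` and `M` an Artinian `R`-module with an injective Frobenius action `F`.
Then every ideal in the set `Γ` of annihilators of `F`-invariant submodules of `M` is a
radical ideal of `R`. -/
theorem annihilators_of_frobenius_invariant_submodules_isRadical
    {R M : Type*} [CommRing R] [IsLocalRing R] [IsNoetherianRing R]
    (p : ℕ) [Fact p.Prime] [CharP R p]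
    [AddCommGroup M] [Module R M] [IsArtinian R M]
    (F : M → M)
    (hadd : ∀ x y : M, F (x + y) = F x + F y)
    (hsmul : ∀ (r : R) (m : M), F (r • m) = r ^ p • F m)
    (hinj : Function.Injective F) :
    ∀ I ∈ {I : Ideal R | ∃ N : Submodule R M, (∀ x ∈ N, F x ∈ N) ∧ I = N.annihilator},
      I.IsRadical :=
  annihilators_of_frobenius_invariant_submodules_isRadical_general p F hsmul hinj
end

section
/- Let (R, 𝔪, k) be a Noetherian local ring of prime characteristic p and let M be an Artinian R-module with an injective Frobenius action F. Let Γ = {Ann_R(N) : N an R-submodule of M with F(N) ⊆ N}. If I ∈ Γ and I = P_1 ∩ ⋯ ∩ P_n is an irredundant intersection of prime ideals P_1, …, P_n (i.e., no P_i can be omitted), then P_i ∈ Γ for every i = 1, …, n. -/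
/-- **Sharp; Enescu–Hochster (closure under primary decomposition).** Let `(R, 𝔪, k)` be a
Noetherian local ring of prime characteristic `p` and `M` an Artinian `R`-module with an
injective Frobenius action `F`.  Let `Γ` be the set of annihilators of `F`-invariant
submodules of `M`.  If `I ∈ Γ` and `I = P₁ ∩ ⋯ ∩ Pₙ` is an irredundant intersection of
prime ideals, then each `Pᵢ ∈ Γ`. -/
theorem annihilators_of_frobenius_invariant_submodules_primary_decomposition
    {R M : Type*} [CommRing R] [IsLocalRing R] [IsNoetherianRing R]
    (p : ℕ) [Fact p.Prime] [CharP R p]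
    [AddCommGroup M] [Module R M] [IsArtinian R M]
    (F : M → M)
    (hadd : ∀ x y : M, F (x + y) = F x + F y)
    (hsmul : ∀ (r : R) (m : M), F (r • m) = r ^ p • F m)
    (hinj : Function.Injective F)
    (I : Ideal R)
    (hI : I ∈ {I : Ideal R | ∃ N : Submodule R M, (∀ x ∈ N, F x ∈ N) ∧ I = N.annihilator})
    (n : ℕ) (hn : 0 < n) (P : Fin n → Ideal R) (hprime : ∀ i, (P i).IsPrime)
    (hdecomp : I = ⨅ i, P i)
    (hirr : ∀ i : Fin n, (⨅ j ∈ ({i}ᶜ : Set (Fin n)), P j) ≠ I) :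
    ∀ i, P i ∈
      {I : Ideal R | ∃ N : Submodule R M, (∀ x ∈ N, F x ∈ N) ∧ I = N.annihilator} := by
  obtain ⟨N, hFN, hIN⟩ := hI
  intro i
  -- basic facts about iterates of F
  have hF0 : F 0 = 0 := by
    have h := hadd 0 0
    rw [add_zero] at h
    exact (left_eq_add.mp h)
  have hit0 : ∀ e : ℕ, F^[e] (0 : M) = 0 := by
    intro e; induction e with
    | zero => rfl
    | succ e ih => rw [Function.iterate_succ_apply', ih, hF0]
  have hitadd : ∀ (e : ℕ) (x y : M), F^[e] (x + y) = F^[e] x + F^[e] y := by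
    intro e; induction e with
    | zero => intro x y; rfl
    | succ e ih =>
      intro x y
      rw [Function.iterate_succ_apply', ih, hadd, Function.iterate_succ_apply',
        Function.iterate_succ_apply']
  have hitsmul : ∀ (e : ℕ) (r : R) (m : M), F^[e] (r • m) = r ^ (p ^ e) • F^[e] m := by
    intro e; induction e with
    | zero => intro r m; simp
    | succ e ih =>
      intro r m
      rw [Function.iterate_succ_apply', ih, hsmul, Function.iterate_succ_apply',
        ← pow_mul, ← pow_succ]
  have hitN : ∀ (e : ℕ) (x : M), x ∈ N → F^[e] x ∈ N := by
    intro e; induction e with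
    | zero => intro x hx; exact hx
    | succ e ih =>
      intro x hx
      rw [Function.iterate_succ_apply']
      exact hFN _ (ih x hx)
  -- the candidate submodule
  let Ni : Submodule R M :=
    { carrier := {g | g ∈ N ∧ ∀ (e : ℕ), ∀ a ∈ P i, a • F^[e] g = 0}
      add_mem' := by
        rintro x y ⟨hxN, hx⟩ ⟨hyN, hy⟩
        refine ⟨N.add_mem hxN hyN, fun e a ha => ?_⟩
        rw [hitadd, smul_add, hx e a ha, hy e a ha, add_zero]
      zero_mem' := by
        refine ⟨N.zero_mem, fun e a ha => ?_⟩
        rw [hit0, smul_zero]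
      smul_mem' := by
        rintro r x ⟨hxN, hx⟩
        refine ⟨N.smul_mem r hxN, fun e a ha => ?_⟩
        rw [hitsmul, smul_comm, hx e a ha, smul_zero] }
  have memNi : ∀ x : M, x ∈ Ni ↔ (x ∈ N ∧ ∀ (e : ℕ), ∀ a ∈ P i, a • F^[e] x = 0) :=
    fun x => Iff.rfl
  refine ⟨Ni, ?_, ?_⟩
  · -- F-invariance of Ni
    intro x hx
    rw [memNi] at hx ⊢
    obtain ⟨hxN, hx⟩ := hx
    refine ⟨hFN x hxN, fun e a ha => ?_⟩
    rw [← Function.iterate_succ_apply]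
    exact hx (e + 1) a ha
  · -- P i = annihilator of Ni
    apply le_antisymm
    · intro a ha
      rw [Submodule.mem_annihilator]
      intro x hx
      rw [memNi] at hx
      simpa using hx.2 0 a ha
    · intro c hc
      by_contra hcP
      -- show Q ≤ P i, contradicting irredundancy
      have hQP : (⨅ j ∈ ({i}ᶜ : Set (Fin n)), P j) ≤ P i := by
        intro s hs
        simp only [Submodule.mem_iInf] at hs
        -- s • g lands in Ni for every g ∈ N
        have hsg : ∀ g ∈ N, s • g ∈ Ni := by
          intro g hg
          rw [memNi]
          refine ⟨N.smul_mem s hg, fun e a ha => ?_⟩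
          have h1 : (1 : ℕ) ≤ p ^ e := Nat.one_le_pow _ _ (Fact.out : p.Prime).pos
          have hsplit : s ^ (p ^ e) = s * s ^ (p ^ e - 1) := by
            conv_lhs => rw [← Nat.sub_add_cancel h1]
            rw [pow_succ, mul_comm]
          have hasI : a * s ∈ I := by
            rw [hdecomp, Submodule.mem_iInf]
            intro j
            by_cases hj : j = i
            · subst hj; exact (P j).mul_mem_right s ha
            · refine (P j).mul_mem_left a (hs j ?_)
              simp [hj]
          have hann : (a * s) ∈ N.annihilator := hIN ▸ hasI
          rw [Submodule.mem_annihilator] at hann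
          rw [hitsmul, hsplit, mul_smul, smul_smul]
          exact hann _ (N.smul_mem _ (hitN e g hg))
        -- hence c * s annihilates N
        have hcs : c * s ∈ I := by
          rw [hIN, Submodule.mem_annihilator]
          intro g hg
          have h := Submodule.mem_annihilator.mp hc _ (hsg g hg)
          rwa [smul_smul] at h
        have hcsP : c * s ∈ P i := by
          rw [hdecomp, Submodule.mem_iInf] at hcs
          exact hcs i
        rcases (hprime i).mem_or_mem hcsP with h | h
        · exact absurd h hcP
        · exact h
      refine hirr i ?_
      apply le_antisymm
      · -- Q ≤ I
        rw [hdecomp]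
        apply le_iInf
        intro j
        by_cases hj : j = i
        · subst hj; exact hQP
        · exact biInf_le P (by simp [hj])
      · -- I ≤ Q
        apply le_iInf₂
        intro j hj
        rw [hdecomp]
        exact iInf_le P j
end

section
/- Let (R, 𝔪, k) be a Noetherian local ring of prime characteristic p and let M be an Artinian R-module with an injective Frobenius action F. Then M is F-stable if and only if there exists a nonzero element m ∈ M with F-ann(m) = 𝔪. -/
/-- Let `(R, 𝔪, k)` be a Noetherian local ring of prime characteristic `p` and `M` an Artinian
`R`-module with an injective Frobenius action `F`.  Then `M` is `F`-stable (i.e. it is not the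
case that `Soc(M) ∩ F^e(Soc(M)) = 0` for all large `e`) if and only if there is a nonzero
`m ∈ M` whose `F`-annihilator `{r : r • F^e(m) = 0 for all e}` is the maximal ideal `𝔪`. -/
theorem fStable_iff_exists_fann_eq_maximalIdeal
    {R M : Type*} [CommRing R] [IsLocalRing R] [IsNoetherianRing R]
    (p : ℕ) [Fact p.Prime] [CharP R p]
    [AddCommGroup M] [Module R M] [IsArtinian R M]
    (F : M → M)
    (hadd : ∀ x y : M, F (x + y) = F x + F y)
    (hsmul : ∀ (r : R) (m : M), F (r • m) = r ^ p • F m)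
    (hinj : Function.Injective F) :
    (¬ ∃ N : ℕ, 0 < N ∧ ∀ e ≥ N, Socle R M ∩ (F^[e] '' Socle R M) = {0}) ↔
      ∃ m : M, m ≠ 0 ∧
        {r : R | ∀ e : ℕ, r • F^[e] m = 0} = (IsLocalRing.maximalIdeal R : Set R) := by
  classical
  have hp : p ≠ 0 := (Fact.out : p.Prime).ne_zero
  have hF0 : F 0 = 0 := by
    have h := hadd 0 0
    rw [add_zero] at h
    have : F 0 + 0 = F 0 + F 0 := by rw [add_zero]; exact h
    exact (add_left_cancel this).symm
  have hiter0 : ∀ e : ℕ, F^[e] (0 : M) = 0 := fun e => Function.iterate_fixed hF0 e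
  have hiteradd : ∀ (e : ℕ) (x y : M), F^[e] (x + y) = F^[e] x + F^[e] y := by
    intro e
    induction e with
    | zero => intro x y; simp
    | succ e ih =>
      intro x y
      simp only [Function.iterate_succ_apply', ih, hadd]
  have hitersmul : ∀ (e : ℕ) (r : R) (m : M), F^[e] (r • m) = r ^ p ^ e • F^[e] m := by
    intro e
    induction e with
    | zero => intro r m; simp
    | succ e ih =>
      intro r m
      rw [Function.iterate_succ_apply', Function.iterate_succ_apply', ih, hsmul, ← pow_mul,
        ← pow_succ]
  -- backward propagation: if r kills F^[e+1] y it kills F^[e] y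
  have hback : ∀ (r : R) (y : M) (e : ℕ), r • F^[e + 1] y = 0 → r • F^[e] y = 0 := by
    intro r y e h
    apply hinj
    rw [hF0, hsmul]
    rw [Function.iterate_succ_apply'] at h
    calc r ^ p • F (F^[e] y) = r ^ (p - 1) • (r • F (F^[e] y)) := by
          rw [← mul_smul, pow_sub_one_mul hp]
      _ = 0 := by rw [h, smul_zero]
  -- the submodule of elements y with F^[e] y killed by the maximal ideal
  let T : ℕ → Submodule R M := fun e =>
    { carrier := {y : M | ∀ r ∈ IsLocalRing.maximalIdeal R, r • F^[e] y = 0}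
      add_mem' := by
        intro a b ha hb r hr
        rw [hiteradd, smul_add, ha r hr, hb r hr, add_zero]
      zero_mem' := by
        intro r hr
        rw [hiter0, smul_zero]
      smul_mem' := by
        intro c a ha r hr
        rw [hitersmul, ← mul_smul, mul_comm, mul_smul, ha r hr, smul_zero] }
  have hTmem : ∀ (e : ℕ) (y : M), y ∈ T e ↔ ∀ r ∈ IsLocalRing.maximalIdeal R,
      r • F^[e] y = 0 := fun e y => Iff.rfl
  have hTanti : ∀ a b : ℕ, a ≤ b → T b ≤ T a := by
    have hstep : ∀ e : ℕ, T (e + 1) ≤ T e := by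
      intro e y hy r hr
      exact hback r y e (hy r hr)
    intro a b hab
    induction hab with
    | refl => exact le_rfl
    | step h ih => exact le_trans (hstep _) ih
  constructor
  · -- F-stable → there is a nonzero m with F-ann(m) = 𝔪
    intro h
    push_neg at h
    obtain ⟨E, hE⟩ := IsArtinian.monotone_stabilizes
      (⟨fun e => OrderDual.toDual (T e), fun a b hab => hTanti a b hab⟩ : ℕ →o (Submodule R M)ᵒᵈ)
    obtain ⟨e, he, hne⟩ := h (E + 1) (Nat.succ_pos E)
    -- extract a nonzero element of the intersection
    have h0 : (0 : M) ∈ Socle R M ∩ (F^[e] '' Socle R M) := by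
      refine ⟨fun r _ => smul_zero r, 0, fun r _ => smul_zero r, hiter0 e⟩
    obtain ⟨x, hx, hx0⟩ : ∃ x ∈ Socle R M ∩ (F^[e] '' Socle R M), x ≠ 0 := by
      by_contra hc
      push_neg at hc
      apply hne
      ext z
      constructor
      · intro hz; exact hc z hz
      · rintro rfl; exact h0
    obtain ⟨hxs, y, hys, hxy⟩ := hx
    have hy0 : y ≠ 0 := by
      rintro rfl
      rw [hiter0] at hxy
      exact hx0 hxy.symm
    have hyT : y ∈ T e := by
      intro r hr
      rw [hxy]
      exact hxs r hr
    -- stabilization: y ∈ T e' for all e'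
    have hyall : ∀ e' : ℕ, y ∈ T e' := by
      intro e'
      have hyE : y ∈ T E := by
        have := hE e (le_trans (Nat.le_succ E) he)
        have hTeq : T E = T e := congrArg OrderDual.ofDual this
        rw [hTeq]; exact hyT
      rcases le_total e' E with hle | hle
      · exact hTanti e' E hle hyE
      · have := hE e' hle
        have hTeq : T E = T e' := congrArg OrderDual.ofDual this
        rw [← hTeq]; exact hyE
    refine ⟨y, hy0, ?_⟩
    ext r
    simp only [Set.mem_setOf_eq, SetLike.mem_coe]
    constructor
    · intro hr
      by_contra hrm
      have hu : IsUnit r := by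
        rw [IsLocalRing.mem_maximalIdeal, mem_nonunits_iff, not_not] at hrm
        exact hrm
      have := hr 0
      simp only [Function.iterate_zero_apply] at this
      exact hy0 (hu.smul_eq_zero.mp this)
    · intro hr e'
      exact hyall e' r hr
  · -- ∃ m ... → F-stable
    rintro ⟨m, hm0, hann⟩ ⟨N, hN, hall⟩
    have hm : ∀ r ∈ IsLocalRing.maximalIdeal R, ∀ e : ℕ, r • F^[e] m = 0 := by
      intro r hr e
      have : r ∈ {r : R | ∀ e : ℕ, r • F^[e] m = 0} := by rw [hann]; exact hr
      exact this e
    have hmem : F^[N] m ∈ Socle R M ∩ (F^[N] '' Socle R M) := by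
      refine ⟨fun r hr => hm r hr N, m, ?_, rfl⟩
      intro r hr
      have := hm r hr 0
      simpa using this
    have hFN0 : F^[N] m = 0 := by
      have := hall N le_rfl
      rw [this] at hmem
      exact hmem
    have : m = 0 := by
      have hFNinj : Function.Injective (F^[N]) := Function.Injective.iterate hinj N
      apply hFNinj
      rw [hFN0, hiter0]
    exact hm0 this
end

section
/- Let (R, 𝔪, k) be a Noetherian local ring of prime characteristic p containing a perfect coefficient field k, and let M be an Artinian R-module with a Frobenius action F. If F acts injectively on M, then M_s ⊆ Soc(M). -/
/-- The `K`-span of a subset `S` of an `R`-module `M`, where `K` acts on `M` through a ring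
homomorphism `ι : K →+* R` (e.g. the inclusion of a coefficient field): the set of finite
`K`-linear combinations of elements of `S`. -/
def kSpan {K R M : Type*} [Field K] [CommRing R] [AddCommGroup M] [Module R M]
    (ι : K →+* R) (S : Set M) : Set M :=
  {m : M | ∃ (n : ℕ) (c : Fin n → K) (s : Fin n → M),
    (∀ i, s i ∈ S) ∧ m = ∑ i, ι (c i) • s i}

/-- The Hartshorne–Speiser stable part of a module `M` with Frobenius action `F`, relative to a
coefficient field `ι : K →+* R`: the intersection over `j ≥ 1` of the `K`-spans of the images
`F^j(M)`. -/
def stablePart {K R M : Type*} [Field K] [CommRing R] [AddCommGroup M] [Module R M]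
    (ι : K →+* R) (F : M → M) : Set M :=
  ⋂ j ∈ {j : ℕ | 1 ≤ j}, kSpan ι (Set.range F^[j])

/-!
Since `k` is perfect, every `c ∈ k` is a power `d ^ p ^ j`, so `c • F^j(m) = F^j(d • m)` and the
`k`-span of `F^j(M)` is `F^j(M)` itself: an element `x` of the stable part has preimages `y j`
with `F^j(y j) = x`, and by injectivity `F^i(y (i + j)) = y j`. For `r ∈ 𝔪` some `r^n` kills `x`
(Artinian modules over a local ring), hence `r` kills `y j` as soon as `n ≤ p^j`. The tails
`span {y j | j ≥ i}` stabilise, so `y N` lies in the span of the `y (N + n + j)`, which `F^N`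
maps into the `r`-torsion; thus `r • x = r • F^N(y N) = 0`.
-/

open IsLocalRing Submodule Function

theorem IsLocalRing.exists_pow_smul_eq_zero_of_mem_maximalIdeal {R M : Type*} [CommRing R]
    [IsLocalRing R] [AddCommGroup M] [Module R M] [IsArtinian R M] {r : R} (hr : r ∈ maximalIdeal R) (x : M) :
    ∃ n : ℕ, r ^ n • x = 0 := by
  obtain ⟨n, ⟨y, hy⟩, hyx⟩ :=
    IsArtinian.exists_pow_succ_smul_dvd r (⟨x, mem_span_singleton_self x⟩ : R ∙ x)
  obtain ⟨a, rfl⟩ := mem_span_singleton.mp hy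
  have hfix : (r * a) • r ^ n • x = r ^ n • x := by
    have h := congrArg Subtype.val hyx
    simp only [SetLike.val_smul, Nat.succ_eq_add_one] at h
    conv_rhs => rw [← h]
    rw [smul_smul, smul_smul]
    congr 1
    ring
  have hunit : IsUnit (1 - r * a) :=
    isUnit_one_sub_self_of_mem_nonunits _ (Ideal.mul_mem_right a _ hr)
  refine ⟨n, hunit.smul_eq_zero.mp ?_⟩
  rw [sub_smul, one_smul, hfix, sub_self]

theorem IsArtinian.exists_mem_span_range_add {R M : Type*} [Ring R] [AddCommGroup M]
    [Module R M] [IsArtinian R M] (y : ℕ → M) :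
    ∃ N, ∀ i, y N ∈ span R (Set.range fun j => y (N + i + j)) := by
  obtain ⟨N, hN⟩ := IsArtinian.monotone_stabilizes
    ⟨fun i => OrderDual.toDual (span R (Set.range fun j => y (i + j))), fun i i' h =>
      span_mono <| by
        rintro _ ⟨j, rfl⟩
        exact ⟨i' - i + j, by simp only [← add_assoc, Nat.add_sub_cancel' h]⟩⟩
  refine ⟨N, fun i => ?_⟩
  have h : span R (Set.range fun j => y (N + j)) = span R (Set.range fun j => y (N + i + j)) :=
    hN (N + i) (Nat.le_add_right N i)
  rw [← h]
  exact subset_span ⟨0, rfl⟩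

theorem kSpan_range_subset_range {K R S M N : Type*} [Field K] [CommRing R] [CommRing S]
    [AddCommGroup M] [Module R M] [AddCommGroup N] [Module S N] {σ : R →+* S}
    (g : M →ₛₗ[σ] N) (ι : K →+* S) (hι : ∀ c, ∃ a, σ a = ι c) :
    kSpan ι (Set.range g) ⊆ Set.range g := by
  rintro _ ⟨n, c, s, hs, rfl⟩
  choose m hm using hs
  choose a ha using fun i => hι (c i)
  exact ⟨∑ i, a i • m i, by simp [map_sum, ha, hm]⟩

section FrobeniusAction

variable {R M : Type*} [CommRing R] [AddCommGroup M] [Module R M] {p : ℕ} [ExpChar R p]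

def frobeniusIterate (φ : M →ₛₗ[frobenius R p] M) (j : ℕ) :
    M →ₛₗ[iterateFrobenius R p j] M where
  toFun := φ^[j]
  map_add' := iterate_map_add φ j
  map_smul' r m := by
    induction j with
    | zero => simp
    | succ j ih =>
      rw [iterate_succ_apply', iterate_succ_apply', ih, map_smulₛₗ, frobenius_def,
        iterateFrobenius_def, iterateFrobenius_def, ← pow_mul, ← pow_succ]

@[simp]
theorem coe_frobeniusIterate (φ : M →ₛₗ[frobenius R p] M) (j : ℕ) :
    ⇑(frobeniusIterate φ j) = φ^[j] :=
  rfl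

theorem stablePart_subset_range_iterate {K : Type*} [Field K] [ExpChar K p] [PerfectRing K p]
    (ι : K →+* R) (φ : M →ₛₗ[frobenius R p] M) (j : ℕ) :
    stablePart ι φ ⊆ Set.range φ^[j] := by
  intro x hx
  rcases j.eq_zero_or_pos with rfl | hj
  · exact ⟨x, rfl⟩
  refine kSpan_range_subset_range (frobeniusIterate φ j) ι (fun c => ?_)
    (Set.mem_iInter₂.mp hx j hj)
  obtain ⟨d, rfl⟩ := (bijective_iterateFrobenius K p j).2 c
  exact ⟨ι d, (ι.map_iterateFrobenius p d j).symm⟩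

theorem smul_eq_zero_of_iterate_eq {φ : M →ₛₗ[frobenius R p] M} (hφ : Injective φ) {j n : ℕ}
    {x y : M} (hy : φ^[j] y = x) {r : R} (hn : r ^ n • x = 0) (hnj : n ≤ p ^ j) :
    r • y = 0 := by
  refine hφ.iterate j ?_
  rw [← coe_frobeniusIterate, map_smulₛₗ, map_zero, coe_frobeniusIterate, hy,
    iterateFrobenius_def, ← Nat.sub_add_cancel hnj, pow_add, mul_smul, hn, smul_zero]

theorem smul_eq_zero_of_forall_mem_range_iterate [IsArtinian R M] (hp : 1 < p)
    {φ : M →ₛₗ[frobenius R p] M} (hφ : Injective φ) {x : M}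
    (hx : ∀ j, x ∈ Set.range φ^[j]) {r : R} {n : ℕ} (hn : r ^ n • x = 0) : r • x = 0 := by
  choose y hy using hx
  have hshift : ∀ i j, φ^[i] (y (i + j)) = y j := fun i j =>
    hφ.iterate j <| by rw [← iterate_add_apply, add_comm j i, hy, hy]
  have hkill : ∀ j, n ≤ j → r • y j = 0 := fun j hj =>
    smul_eq_zero_of_iterate_eq hφ (hy j) hn (hj.trans (Nat.lt_pow_self hp).le)
  obtain ⟨N, hN⟩ := IsArtinian.exists_mem_span_range_add (R := R) y
  have hspan : span R (Set.range fun j => y (N + n + j)) ≤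
      (torsionBy R M r).comap (frobeniusIterate φ N) := by
    rw [span_le]
    rintro _ ⟨j, rfl⟩
    simp only [SetLike.mem_coe, mem_comap, coe_frobeniusIterate, add_assoc, hshift,
      mem_torsionBy_iff]
    exact hkill _ (Nat.le_add_right n j)
  simpa [hy N] using hspan (hN n)

end FrobeniusAction

theorem stablePart_subset_socle_of_perfect_general
    {K R M : Type*} [Field K] [PerfectField K] [CommRing R] [IsLocalRing R]
    (p : ℕ) [Fact p.Prime] [CharP R p]
    (ι : K →+* R)
    [AddCommGroup M] [Module R M] [IsArtinian R M]
    (F : M → M)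
    (hadd : ∀ x y : M, F (x + y) = F x + F y)
    (hsmul : ∀ (r : R) (m : M), F (r • m) = r ^ p • F m)
    (hinj : Function.Injective F) :
    stablePart ι F ⊆ Socle R M := by
  have : ExpChar K p := ι.expChar ι.injective p
  let φ : M →ₛₗ[frobenius R p] M := { toFun := F, map_add' := hadd, map_smul' := hsmul }
  intro x hx r hr
  obtain ⟨n, hn⟩ := exists_pow_smul_eq_zero_of_mem_maximalIdeal hr x
  exact smul_eq_zero_of_forall_mem_range_iterate (Fact.out : p.Prime).one_lt hinj
    (fun j => stablePart_subset_range_iterate ι φ j hx) hn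

/-- **Hartshorne–Speiser.** Let `(R, 𝔪, k)` be a Noetherian local ring of prime characteristic
`p` containing a *perfect* coefficient field `k` (given by `ι : k →+* R` inducing an
isomorphism onto the residue field), and let `M` be an Artinian `R`-module with a Frobenius
action `F`.  If `F` acts injectively on `M`, then `M_s ⊆ Soc(M)`. -/
theorem stablePart_subset_socle_of_perfect
    {K R M : Type*} [Field K] [PerfectField K] [CommRing R] [IsLocalRing R] [IsNoetherianRing R]
    (p : ℕ) [Fact p.Prime] [CharP R p]
    (ι : K →+* R) (hcoeff : Function.Bijective ((IsLocalRing.residue R).comp ι))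
    [AddCommGroup M] [Module R M] [IsArtinian R M]
    (F : M → M)
    (hadd : ∀ x y : M, F (x + y) = F x + F y)
    (hsmul : ∀ (r : R) (m : M), F (r • m) = r ^ p • F m)
    (hinj : Function.Injective F) :
    stablePart ι F ⊆ Socle R M :=
  stablePart_subset_socle_of_perfect_general p ι F hadd hsmul hinj
end

section
/- Let (R, 𝔪, k) be a Noetherian local ring of prime characteristic p containing a perfect coefficient field k. Let 0 → N → M → L → 0 be a short exact sequence of Artinian R-modules equipped with Frobenius actions F_N, F_M, F_L making both squares commute (i.e., the maps N → M and M → L intertwine the Frobenius actions). Assume F_L acts injectively on L. Then the induced sequence of k-vector spaces 0 → N_s → M_s → L_s is exact, where N_s, M_s, L_s are the stable parts. -/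
section helpers

variable {M : Type*} [AddCommGroup M]

lemma iterAdd (F : M → M) (hadd : ∀ x y : M, F (x + y) = F x + F y) (j : ℕ) :
    ∀ x y : M, F^[j] (x + y) = F^[j] x + F^[j] y := by
  induction j with
  | zero => intro x y; simp
  | succ j ih =>
    intro x y
    rw [Function.iterate_succ_apply', Function.iterate_succ_apply',
      Function.iterate_succ_apply', ih, hadd]

lemma iterZero (F : M → M) (hadd : ∀ x y : M, F (x + y) = F x + F y) (j : ℕ) :
    F^[j] 0 = 0 := by
  have h0 : F 0 = 0 := by
    have h := hadd 0 0
    simp only [add_zero] at h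
    exact (left_eq_add.mp h)
  induction j with
  | zero => simp
  | succ j ih => rw [Function.iterate_succ_apply', ih, h0]

lemma iterSmul {R : Type*} [CommRing R] [Module R M] (p : ℕ) (F : M → M)
    (hs : ∀ (r : R) (x : M), F (r • x) = r ^ p • F x) (j : ℕ) (r : R) (x : M) :
    F^[j] (r • x) = r ^ (p ^ j) • F^[j] x := by
  induction j with
  | zero => simp
  | succ j ih =>
    rw [Function.iterate_succ_apply', Function.iterate_succ_apply', ih, hs,
      ← pow_mul, ← pow_succ]

lemma iterSum (F : M → M) (hadd : ∀ x y : M, F (x + y) = F x + F y) (j : ℕ)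
    {n : ℕ} (a : Fin n → M) : F^[j] (∑ i, a i) = ∑ i, F^[j] (a i) :=
  map_sum (AddMonoidHom.mk' F^[j] (fun x y => iterAdd F hadd j x y)) a Finset.univ

end helpers

lemma stablePart_map {K R A B : Type*} [Field K] [CommRing R]
    [AddCommGroup A] [Module R A] [AddCommGroup B] [Module R B]
    (ι : K →+* R) (φ : A →ₗ[R] B) (FA : A → A) (FB : B → B)
    (hc : ∀ (j : ℕ) (x : A), φ (FA^[j] x) = FB^[j] (φ x)) :
    φ '' stablePart ι FA ⊆ stablePart ι FB := by
  rintro _ ⟨x, hx, rfl⟩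
  simp only [stablePart, Set.mem_iInter, Set.mem_setOf_eq] at hx ⊢
  intro j hj
  obtain ⟨n, c, s, hs, hsum⟩ := hx j hj
  refine ⟨n, c, fun i => φ (s i), fun i => ?_, ?_⟩
  · obtain ⟨y, hy⟩ := hs i
    refine ⟨φ y, ?_⟩
    show FB^[j] (φ y) = φ (s i)
    rw [← hc, hy]
  · rw [hsum, map_sum]
    simp only [map_smul]

/-- **Hartshorne–Speiser.** Let `(R, 𝔪, k)` be a Noetherian local ring of prime characteristic
`p` containing a perfect coefficient field `k`.  Given a short exact sequence
`0 → N → M → L → 0` of Artinian `R`-modules with compatible Frobenius actions, where the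
Frobenius acts injectively on `L`, the induced sequence `0 → N_s → M_s → L_s` of stable parts
is exact: `f` is injective on `N_s`, `f` carries `N_s` into `M_s`, `g` carries `M_s` into
`L_s`, and the image of `N_s` is exactly the kernel of `g` restricted to `M_s`. -/
theorem stablePart_left_exact
    {K R N M L : Type*} [Field K] [PerfectField K]
    [CommRing R] [IsLocalRing R] [IsNoetherianRing R]
    (p : ℕ) [Fact p.Prime] [CharP R p]
    (ι : K →+* R) (hcoeff : Function.Bijective ((IsLocalRing.residue R).comp ι))
    [AddCommGroup N] [Module R N] [IsArtinian R N]
    [AddCommGroup M] [Module R M] [IsArtinian R M]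
    [AddCommGroup L] [Module R L] [IsArtinian R L]
    (f : N →ₗ[R] M) (g : M →ₗ[R] L)
    (hf : Function.Injective f) (hg : Function.Surjective g)
    (hexact : LinearMap.range f = LinearMap.ker g)
    (FN : N → N) (FM : M → M) (FL : L → L)
    (haddN : ∀ x y : N, FN (x + y) = FN x + FN y)
    (hsmulN : ∀ (r : R) (x : N), FN (r • x) = r ^ p • FN x)
    (haddM : ∀ x y : M, FM (x + y) = FM x + FM y)
    (hsmulM : ∀ (r : R) (x : M), FM (r • x) = r ^ p • FM x)
    (haddL : ∀ x y : L, FL (x + y) = FL x + FL y)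
    (hsmulL : ∀ (r : R) (x : L), FL (r • x) = r ^ p • FL x)
    (hcommf : ∀ x : N, f (FN x) = FM (f x))
    (hcommg : ∀ x : M, g (FM x) = FL (g x))
    (hinjL : Function.Injective FL) :
    Set.InjOn f (stablePart ι FN) ∧
    f '' stablePart ι FN ⊆ stablePart ι FM ∧
    g '' stablePart ι FM ⊆ stablePart ι FL ∧
    f '' stablePart ι FN = {m ∈ stablePart ι FM | g m = 0} := by
  -- iterated intertwining
  have hcf : ∀ (j : ℕ) (x : N), f (FN^[j] x) = FM^[j] (f x) := by
    intro j
    induction j with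
    | zero => intro x; simp
    | succ j ih =>
      intro x
      rw [Function.iterate_succ_apply', hcommf, ih]
      exact (Function.iterate_succ_apply' FM j (f x)).symm
  have hcg : ∀ (j : ℕ) (x : M), g (FM^[j] x) = FL^[j] (g x) := by
    intro j
    induction j with
    | zero => intro x; simp
    | succ j ih =>
      intro x
      rw [Function.iterate_succ_apply', hcommg, ih]
      exact (Function.iterate_succ_apply' FL j (g x)).symm
  -- perfectness: p^j-th roots in K
  haveI : CharP K p := RingHom.charP ι ι.injective p
  have hroot : ∀ (j : ℕ) (c : K), ∃ d : K, d ^ (p ^ j) = c := by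
    intro j
    induction j with
    | zero => intro c; exact ⟨c, by simp⟩
    | succ j ih =>
      intro c
      obtain ⟨e, he⟩ := ih c
      obtain ⟨d, hd⟩ := surjective_frobenius K p e
      refine ⟨d, ?_⟩
      rw [pow_succ', pow_mul, show d ^ p = e from hd, he]
  have hBf : f '' stablePart ι FN ⊆ stablePart ι FM := stablePart_map ι f FN FM hcf
  have hBg : g '' stablePart ι FM ⊆ stablePart ι FL := stablePart_map ι g FM FL hcg
  refine ⟨hf.injOn, hBf, hBg, ?_⟩
  ext m
  constructor
  · rintro ⟨x, hx, rfl⟩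
    refine ⟨hBf ⟨x, hx, rfl⟩, ?_⟩
    have : f x ∈ LinearMap.ker g := hexact ▸ LinearMap.mem_range_self f x
    exact this
  · rintro ⟨hm, hgm⟩
    have hmr : m ∈ LinearMap.range f := by rw [hexact]; exact hgm
    obtain ⟨x, rfl⟩ := hmr
    refine ⟨x, ?_, rfl⟩
    simp only [stablePart, Set.mem_iInter, Set.mem_setOf_eq] at hm ⊢
    intro j hj
    obtain ⟨n, c, s, hs, hsum⟩ := hm j hj
    choose mi hmi using hs
    choose d hd using fun i => hroot j (c i)
    set u : M := ∑ i, ι (d i) • mi i with hu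
    have hFMu : FM^[j] u = f x := by
      rw [hu, iterSum FM haddM j]
      rw [hsum]
      congr 1
      ext i
      rw [iterSmul p FM hsmulM j, hmi, ← map_pow, hd]
    have hgu : g u = 0 := by
      apply hinjL.iterate j
      rw [← hcg, hFMu, iterZero FL haddL j]
      exact hgm
    have hur : u ∈ LinearMap.range f := by rw [hexact]; exact hgu
    obtain ⟨y, hy⟩ := hur
    have hxy : FN^[j] y = x := by
      apply hf
      rw [hcf, hy, hFMu]
    refine ⟨1, fun _ => 1, fun _ => x, fun _ => ⟨y, hxy⟩, by simp⟩
end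

section
/- Let p be a prime, let k ⊆ L be a finite extension of fields of characteristic p, and let R = k + xL[[x]] be the subring of the power series ring L[[x]] consisting of the power series whose constant term lies in k. Let a ∈ L with a ∉ k, and set u = a·x. Then the set {c ∈ R : c·u^q ∈ x^q·R for all q = p^e, e ≥ 0} equals x·L[[x]], the maximal ideal of R. In particular, with I = xR one has I(u) = 𝔪, so R is F-stable. -/
/-- The subring `R = k + xL⟦x⟧` of the power series ring `L⟦x⟧`: power series whose constant
term lies in (the image of) `k`. -/
noncomputable def kPlusXL (k L : Type*) [Field k] [Field L] [Algebra k L] : Subring (PowerSeries L) :=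
  Subring.comap (PowerSeries.constantCoeff (R := L)) (algebraMap k L).range

/-!
If `c u^q ∈ x^q R` then already for `q = 1` we get `c · a x = x r` with `r ∈ R`, so `a c(0) = r(0) ∈ k`;
since `a ∉ k`, this forces `c(0) = 0`. Conversely, if `c(0) = 0` then `c u^q = x^q · (a^q c)` and
`a^q c ∈ xL⟦x⟧ ⊆ R`.
-/

open PowerSeries

theorem Subfield.eq_zero_of_mul_mem {L : Type*} [Field L] {K : Subfield L} {a b : L}
    (ha : a ∉ K) (hb : b ∈ K) (hab : a * b ∈ K) : b = 0 := by
  by_contra hb0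
  exact ha (by simpa [hb0] using K.mul_mem hab (K.inv_mem hb))

namespace kPlusXL

variable {k L : Type*} [Field k] [Field L] [Algebra k L]

theorem mem_iff {f : PowerSeries L} :
    f ∈ kPlusXL k L ↔ constantCoeff f ∈ (algebraMap k L).fieldRange :=
  Iff.rfl

theorem mem_of_constantCoeff_eq_zero {f : PowerSeries L} (hf : constantCoeff f = 0) :
    f ∈ kPlusXL k L :=
  mem_iff.2 (hf ▸ zero_mem _)

theorem mul_constantCoeff_mem_of_mul_mem_span {a : L} {c u x0 : kPlusXL k L}
    (hu : (u : PowerSeries L) = C a * X) (hx : (x0 : PowerSeries L) = X)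
    (h : c * u ∈ Ideal.span {x0}) :
    a * constantCoeff (c : PowerSeries L) ∈ (algebraMap k L).fieldRange := by
  obtain ⟨r, hr⟩ := Ideal.mem_span_singleton'.1 h
  have hr_mul_X : (r : PowerSeries L) * X = C a * (c : PowerSeries L) * X := by
    have := congrArg Subtype.val hr
    push_cast at this
    rw [← hx, this, hu, hx]
    ring
  have hr_eq : (r : PowerSeries L) = C a * (c : PowerSeries L) := mul_right_cancel₀ X_ne_zero hr_mul_X
  simpa [hr_eq] using mem_iff.1 r.2

theorem mul_pow_mem_span_pow {a : L} {c u x0 : kPlusXL k L}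
    (hu : (u : PowerSeries L) = C a * X) (hx : (x0 : PowerSeries L) = X)
    (hc : constantCoeff (c : PowerSeries L) = 0) (n : ℕ) :
    c * u ^ n ∈ Ideal.span {x0 ^ n} := by
  have hmem : C (a ^ n) * (c : PowerSeries L) ∈ kPlusXL k L :=
    mem_of_constantCoeff_eq_zero (by simp [hc])
  refine Ideal.mem_span_singleton'.2 ⟨⟨_, hmem⟩, Subtype.ext ?_⟩
  push_cast
  rw [hu, hx, mul_pow, ← map_pow]
  ring

end kPlusXL

theorem kPlusXL_fStable_general
    (p : ℕ)
    (k L : Type*) [Field k] [Field L] [Algebra k L]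
    (a : L) (ha : a ∉ (algebraMap k L).range)
    (u x0 : kPlusXL k L)
    (hu : (u : PowerSeries L) = PowerSeries.C (R := L) a * PowerSeries.X)
    (hx : (x0 : PowerSeries L) = PowerSeries.X) :
    {c : kPlusXL k L | ∀ e : ℕ, c * u ^ p ^ e ∈ Ideal.span {x0 ^ p ^ e}} =
      {c : kPlusXL k L | PowerSeries.constantCoeff (R := L) (c : PowerSeries L) = 0} := by
  ext c
  refine ⟨fun h => ?_, fun hc e => kPlusXL.mul_pow_mem_span_pow hu hx hc _⟩
  have h₁ : c * u ∈ Ideal.span {x0} := by simpa using h 0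
  exact Subfield.eq_zero_of_mul_mem ha (kPlusXL.mem_iff.1 c.2)
    (kPlusXL.mul_constantCoeff_mem_of_mul_mem_span hu hx h₁)

/-- Let `k ⊆ L` be a finite extension of fields of prime characteristic `p` and
`R = k + xL⟦x⟧`.  For `a ∈ L \ k` and `u = a·x`, the set
`{c ∈ R : c·u^q ∈ x^q·R for all q = p^e}` equals `xL⟦x⟧`, the maximal ideal of `R`
(the set of elements of `R` with zero constant term).  In particular, with `I = xR` one has
`I(u) = 𝔪`, so `R` is F-stable. -/
theorem kPlusXL_fStable
    (p : ℕ) [Fact p.Prime]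
    (k L : Type*) [Field k] [Field L] [Algebra k L] [CharP L p] [Module.Finite k L]
    (a : L) (ha : a ∉ (algebraMap k L).range)
    (u x0 : kPlusXL k L)
    (hu : (u : PowerSeries L) = PowerSeries.C (R := L) a * PowerSeries.X)
    (hx : (x0 : PowerSeries L) = PowerSeries.X) :
    {c : kPlusXL k L | ∀ e : ℕ, c * u ^ p ^ e ∈ Ideal.span {x0 ^ p ^ e}} =
      {c : kPlusXL k L | PowerSeries.constantCoeff (R := L) (c : PowerSeries L) = 0} :=
  kPlusXL_fStable_general p k L a ha u x0 hu hx
end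

section
/- Let p be a prime and let k ⊆ L be a finite extension of fields of characteristic p that is not separable. Let R = k + xL[[x]] be the subring of L[[x]] of power series with constant term in k, and let K be the perfect closure of k. Then the ring K ⊗_k R is not reduced: there exists a nonzero element v ∈ K ⊗_k R with v^p = 0. -/
open scoped TensorProduct
open Polynomial

/-- `R = k + xL⟦x⟧` is a `k`-algebra via the constant power series. -/
noncomputable instance (k L : Type*) [Field k] [Field L] [Algebra k L] :
    Algebra k (kPlusXL k L) :=
  RingHom.toAlgebra <|
    RingHom.codRestrict ((PowerSeries.C (R := L)).comp (algebraMap k L)) (kPlusXL k L) fun c => by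
      simp [kPlusXL, Subring.mem_comap]

/-- The perfect closure `K` of `k` is a `k`-algebra. -/
noncomputable instance (k : Type*) [Field k] (p : ℕ) [Fact p.Prime] [CharP k p] :
    Algebra k (PerfectClosure k p) :=
  (PerfectClosure.of k p).toAlgebra

theorem minpoly.natDegree_pow_char_lt {k L : Type*} [Field k] [Field L] [Algebra k L]
    (p : ℕ) [Fact p.Prime] [CharP k p] {a : L} (ha : IsIntegral k a)
    (hsep : ¬ IsSeparable k a) : (minpoly k (a ^ p)).natDegree < (minpoly k a).natDegree := by
  have hp := (Fact.out : p.Prime)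
  set f := minpoly k a
  have hderiv : derivative f = 0 :=
    not_not.mp <| mt (separable_iff_derivative_ne_zero (minpoly.irreducible ha)).mpr hsep
  have hexpand : expand k p (contract p f) = f := expand_contract p hderiv hp.ne_zero
  have hdeg : f.natDegree = (contract p f).natDegree * p := by
    rw [← natDegree_expand, hexpand]
  have hne : contract p f ≠ 0 := fun h => minpoly.ne_zero ha <| by simpa [h] using hexpand.symm
  have hroot : Polynomial.aeval (a ^ p) (contract p f) = 0 := by
    rw [← expand_aeval, hexpand, minpoly.aeval]
  have hpos : 0 < (contract p f).natDegree :=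
    Nat.pos_of_mul_pos_right (hdeg ▸ minpoly.natDegree_pos ha)
  calc (minpoly k (a ^ p)).natDegree ≤ (contract p f).natDegree :=
        natDegree_le_natDegree (minpoly.degree_le_of_ne_zero k _ hne hroot)
    _ < (contract p f).natDegree * p := lt_mul_of_one_lt_right hpos hp.one_lt
    _ = f.natDegree := hdeg.symm

theorem TensorProduct.exists_ne_zero_pow_eq_zero_of_sum_smul_pow_eq_zero (p : ℕ)
    {k K R ι : Type*} [Field k] [CommRing K] [Nontrivial K] [Algebra k K] [CommRing R] [Algebra k R] [ExpChar k p]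
    [ExpChar K p] [PerfectRing K p] [Fintype ι] {r : ι → R} (hr : LinearIndependent k r)
    {c : ι → k} (hc : c ≠ 0) (hrel : ∑ i, c i • r i ^ p = 0) :
    ∃ v : K ⊗[k] R, v ≠ 0 ∧ v ^ p = 0 := by
  set root : ι → K := fun i => (frobeniusEquiv K p).symm (algebraMap k K (c i))
  have hv : ∑ i, root i ⊗ₜ[k] r i ≠ 0 := by
    obtain ⟨i, hi⟩ := Function.ne_iff.mp hc
    intro h
    have hli := Module.Flat.linearIndependent_one_tmul (S := K) hr
    have hroot : root i = 0 :=
      Fintype.linearIndependent_iff.mp hli root (by simpa [smul_tmul'] using h) i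
    exact hi (by simpa [root] using hroot)
  have : Nontrivial (K ⊗[k] R) := nontrivial_of_ne _ _ hv
  have : ExpChar (K ⊗[k] R) p := expChar_of_injective_algebraMap (algebraMap k _).injective p
  refine ⟨_, hv, ?_⟩
  simp only [sum_pow_char, Algebra.TensorProduct.tmul_pow, root, frobeniusEquiv_symm_pow_p,
    Algebra.algebraMap_eq_smul_one, smul_tmul, ← tmul_sum, hrel, tmul_zero]

namespace kPlusXL

variable (k : Type*) {L : Type*} [Field k] [Field L] [Algebra k L]

noncomputable def val : kPlusXL k L →ₐ[k] PowerSeries L where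
  __ := (kPlusXL k L).subtype
  commutes' _ := PowerSeries.algebraMap_apply.symm

@[simp]
theorem val_apply (r : kPlusXL k L) : val k r = r :=
  rfl

theorem val_injective : Function.Injective (val k (L := L)) :=
  Subtype.val_injective

noncomputable def xMulC (b : L) : kPlusXL k L :=
  ⟨PowerSeries.X * PowerSeries.C b, by simp [kPlusXL, Subring.mem_comap]⟩

@[simp]
theorem coe_xMulC (b : L) : (xMulC k b : PowerSeries L) = PowerSeries.X * PowerSeries.C b :=
  rfl

theorem linearIndependent_xMulC {ι : Type*} {b : ι → L} (hb : LinearIndependent k b) :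
    LinearIndependent k fun i => xMulC k (b i) :=
  .of_comp ((PowerSeries.coeff 1).restrictScalars k ∘ₗ (val k).toLinearMap) <| by
    convert hb using 1
    funext i
    simp

theorem sum_coeff_smul_xMulC_pow_eq_zero (n : ℕ) (g : k[X]) {y : L} (hy : aeval (y ^ n) g = 0) :
    ∑ i : Fin (g.natDegree + 1), g.coeff i • xMulC k (y ^ (i : ℕ)) ^ n = 0 := by
  apply val_injective k
  simp only [map_sum, map_smul, map_zero]
  have hterm (i : ℕ) : val k (xMulC k (y ^ i) ^ n) =
      PowerSeries.X ^ n * algebraMap L (PowerSeries L) (y ^ n) ^ i := by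
    simp [mul_pow, ← pow_mul, mul_comm]
  calc ∑ i : Fin (g.natDegree + 1), g.coeff i • val k (xMulC k (y ^ (i : ℕ)) ^ n)
      = PowerSeries.X ^ n * ∑ i : Fin (g.natDegree + 1),
          g.coeff i • algebraMap L (PowerSeries L) (y ^ n) ^ (i : ℕ) := by
        simp only [hterm, mul_smul_comm, Finset.mul_sum]
    _ = PowerSeries.X ^ n * aeval (algebraMap L (PowerSeries L) (y ^ n)) g := by
        rw [aeval_eq_sum_range, Fin.sum_univ_eq_sum_range (fun i => g.coeff i • _ ^ i)]
    _ = 0 := by rw [aeval_algebraMap_apply, hy, map_zero, mul_zero]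

end kPlusXL

theorem perfectClosure_tensor_not_reduced_general
    (p : ℕ) [Fact p.Prime]
    (k L : Type*) [Field k] [Field L] [Algebra k L] [CharP k p]
    [Module.Finite k L] (hsep : ¬ Algebra.IsSeparable k L) :
    ∃ v : (PerfectClosure k p) ⊗[k] (kPlusXL k L), v ≠ 0 ∧ v ^ p = 0 := by
  obtain ⟨a, ha⟩ : ∃ a : L, ¬ IsSeparable k a := by
    simpa [Algebra.isSeparable_def] using hsep
  have hint : IsIntegral k a := Algebra.IsIntegral.isIntegral a
  set g := minpoly k (a ^ p)
  have hlt : g.natDegree < (minpoly k a).natDegree := minpoly.natDegree_pow_char_lt p hint ha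
  have hli : LinearIndependent k fun i : Fin (g.natDegree + 1) => a ^ (i : ℕ) :=
    (linearIndependent_pow a).comp (Fin.castLE hlt) (Fin.castLE_injective hlt)
  have hg : (fun i : Fin (g.natDegree + 1) => g.coeff i) ≠ 0 :=
    Function.ne_iff.mpr ⟨Fin.last _, by simp [(minpoly.monic (hint.pow p)).coeff_natDegree, g]⟩
  exact TensorProduct.exists_ne_zero_pow_eq_zero_of_sum_smul_pow_eq_zero p
    (kPlusXL.linearIndependent_xMulC k hli) hg
    (kPlusXL.sum_coeff_smul_xMulC_pow_eq_zero k p g (minpoly.aeval k _))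

/-- Let `k ⊆ L` be a finite *inseparable* extension of fields of prime characteristic `p`,
`R = k + xL⟦x⟧`, and `K` the perfect closure of `k`.  Then `K ⊗_k R` is not reduced: it
contains a nonzero element `v` with `v^p = 0`. -/
theorem perfectClosure_tensor_not_reduced
    (p : ℕ) [Fact p.Prime]
    (k L : Type*) [Field k] [Field L] [Algebra k L] [CharP k p] [CharP L p]
    [Module.Finite k L] (hsep : ¬ Algebra.IsSeparable k L) :
    ∃ v : (PerfectClosure k p) ⊗[k] (kPlusXL k L), v ≠ 0 ∧ v ^ p = 0 :=
  perfectClosure_tensor_not_reduced_general p k L hsep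
end
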